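/- Let E0 > 0 and set C12 = (3√3/16)·E0^{3/2}·(E0+4)². Suppose γ_n > 0 with γ_n → 0, μ_n > 0 with γ_n⁴/μ_n → C12, and for each n the pair (q_n, ν_n) with ν_n > 0 and 0 < q_n < 1 solves the transition system (A)–(B) for the parameters (E0, γ_n, μ_n), with q_n → 1. Then ν_n → ∞ and γ_n²·ν_n → C12; equivalently, the corresponding transition frequencies ω_n = E1(γ_n) + ν_n satisfy γ_n²·ω_n → C12. -/

import Mathlib

/-!
Put `B = γ²(ν+a)²(ν+E1) / (ν(ν+a+ε))` (`bScale`). Equation (B) says exactly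
`B = (2/9)·(2+q)²/(1+q)·γ⁴/μ`, so `B → C12 > 0` as `q → 1`. Squaring and inserting (A) gives
`B² = (1-q²)/12 · (ν+a)⁴(ν+E1)³`; since `1 - q² → 0⁺`, this forces `(ν+a)⁷ ≥ (ν+a)⁴(ν+E1)³ → ∞`,
hence `ν → ∞`. Finally `γ²ν = B · ν²(ν+a+ε)/((ν+a)²(ν+E1))`, whose last factor tends to `1`, and
`γ²E1 → 0`.
-/

open Filter

/-- The unique positive root of `ε² + (E0+4)ε - γ² = 0`. -/
noncomputable def epsPar (E0 γ : ℝ) : ℝ :=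
  (-(E0 + 4) + Real.sqrt ((E0 + 4)^2 + 4 * γ^2)) / 2

/-- `E1 = E0 + ε`. -/
noncomputable def E1Par (E0 γ : ℝ) : ℝ := E0 + epsPar E0 γ

/-- `a = 4 + E0 + ε`. -/
noncomputable def aPar (E0 γ : ℝ) : ℝ := 4 + E0 + epsPar E0 γ

/-- Equation (A) of the transition system:
`(1-q)(1+q) = 12γ⁴ / (ν² (ν+E1) (ν+a+ε)²)`. -/
def EqA (E0 γ q ν : ℝ) : Prop :=
  (1 - q) * (1 + q) =
    12 * γ^4 / (ν^2 * (ν + E1Par E0 γ) * (ν + aPar E0 γ + epsPar E0 γ)^2)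

/-- Equation (B) of the transition system:
`(2+q)²/(1+q) = (9/2)(μ/γ²)(ν+a)²(ν+E1)/(ν(ν+a+ε))`. -/
def EqB (E0 γ μ q ν : ℝ) : Prop :=
  (2 + q)^2 / (1 + q) =
    (9/2) * (μ / γ^2) * ((ν + aPar E0 γ)^2 * (ν + E1Par E0 γ)) /
      (ν * (ν + aPar E0 γ + epsPar E0 γ))

open Topology

lemma epsPar_nonneg (E0 γ : ℝ) : 0 ≤ epsPar E0 γ := by
  have : |E0 + 4| ≤ Real.sqrt ((E0 + 4)^2 + 4 * γ^2) := Real.abs_le_sqrt (by nlinarith)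
  unfold epsPar
  linarith [le_abs_self (E0 + 4)]

section
variable {E0 : ℝ} {ι : Type*} {l : Filter ι} {γ : ι → ℝ}

lemma tendsto_epsPar (hE0 : -4 ≤ E0) (hγ : Tendsto γ l (𝓝 0)) :
    Tendsto (fun i => epsPar E0 (γ i)) l (𝓝 0) := by
  have h0 : epsPar E0 0 = 0 := by
    simp [epsPar, Real.sqrt_sq (by linarith : 0 ≤ E0 + 4)]
  have hc : Continuous (epsPar E0) := by unfold epsPar; fun_prop
  exact (hc.tendsto' 0 0 h0).comp hγ

lemma tendsto_aPar (hE0 : -4 ≤ E0) (hγ : Tendsto γ l (𝓝 0)) :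
    Tendsto (fun i => aPar E0 (γ i)) l (𝓝 (4 + E0)) := by
  simpa [aPar] using (tendsto_epsPar hE0 hγ).const_add (4 + E0)

lemma tendsto_E1Par (hE0 : -4 ≤ E0) (hγ : Tendsto γ l (𝓝 0)) :
    Tendsto (fun i => E1Par E0 (γ i)) l (𝓝 E0) := by
  simpa [E1Par] using (tendsto_epsPar hE0 hγ).const_add E0

end

lemma aPar_eq_E1Par_add (E0 γ : ℝ) : aPar E0 γ = E1Par E0 γ + 4 := by
  unfold aPar E1Par; ring

section
variable {E0 γ μ q ν : ℝ}

lemma add_E1Par_pos (hE0 : 0 ≤ E0) (hν : 0 < ν) : 0 < ν + E1Par E0 γ := by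
  unfold E1Par; linarith [epsPar_nonneg E0 γ]

lemma add_aPar_pos (hE0 : 0 ≤ E0) (hν : 0 < ν) : 0 < ν + aPar E0 γ := by
  linarith [add_E1Par_pos (γ := γ) hE0 hν, aPar_eq_E1Par_add E0 γ]

lemma add_aPar_add_epsPar_pos (hE0 : 0 ≤ E0) (hν : 0 < ν) :
    0 < ν + aPar E0 γ + epsPar E0 γ := by
  linarith [add_aPar_pos (γ := γ) hE0 hν, epsPar_nonneg E0 γ]

noncomputable def bScale (E0 γ ν : ℝ) : ℝ :=
  γ^2 * ((ν + aPar E0 γ)^2 * (ν + E1Par E0 γ)) / (ν * (ν + aPar E0 γ + epsPar E0 γ))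

lemma bScale_eq_of_eqB (hE0 : 0 ≤ E0) (hν : 0 < ν) (hγ : γ ≠ 0) (hμ : μ ≠ 0) (hq : -1 < q)
    (hB : EqB E0 γ μ q ν) : bScale E0 γ ν = 2/9 * ((2 + q)^2 / (1 + q)) * (γ^4 / μ) := by
  have hS := add_aPar_add_epsPar_pos (γ := γ) hE0 hν
  have hq' : 1 + q ≠ 0 := by linarith
  unfold EqB at hB
  unfold bScale
  rw [hB]
  field_simp

lemma bScale_sq_of_eqA (hE0 : 0 ≤ E0) (hν : 0 < ν) (hA : EqA E0 γ q ν) :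
    bScale E0 γ ν ^ 2 = (1 - q) * (1 + q) / 12 * ((ν + aPar E0 γ)^4 * (ν + E1Par E0 γ)^3) := by
  have hE := add_E1Par_pos (γ := γ) hE0 hν
  have hS := add_aPar_add_epsPar_pos (γ := γ) hE0 hν
  unfold EqA at hA
  unfold bScale
  rw [hA]
  field_simp

lemma sq_mul_eq_bScale_mul (hE0 : 0 ≤ E0) (hν : 0 < ν) :
    γ^2 * ν = bScale E0 γ ν *
      (ν^2 * (ν + aPar E0 γ + epsPar E0 γ) / ((ν + aPar E0 γ)^2 * (ν + E1Par E0 γ))) := by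
  have hE := add_E1Par_pos (γ := γ) hE0 hν
  have hS := add_aPar_add_epsPar_pos (γ := γ) hE0 hν
  have ha := add_aPar_pos (γ := γ) hE0 hν
  unfold bScale
  field_simp

end

section
variable {ι : Type*} {l : Filter ι}

lemma tendsto_atTop_of_pow_tendsto_atTop {x : ι → ℝ} {k : ℕ} (hk : k ≠ 0)
    (hx : ∀ᶠ i in l, 0 ≤ x i) (h : Tendsto (fun i => x i ^ k) l atTop) : Tendsto x l atTop := by
  rw [tendsto_atTop] at h ⊢
  intro b
  filter_upwards [hx, h (max b 0 ^ k)] with i hxi hi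
  exact (le_max_left _ _).trans (le_of_pow_le_pow_left₀ hk hxi hi)

lemma tendsto_add_div_add_atTop {x b c : ι → ℝ} {B C : ℝ} (hx : Tendsto x l atTop)
    (hb : Tendsto b l (𝓝 B)) (hc : Tendsto c l (𝓝 C)) :
    Tendsto (fun i => (x i + b i) / (x i + c i)) l (𝓝 1) := by
  have h := ((hb.div_atTop hx).const_add 1).div ((hc.div_atTop hx).const_add 1) (by norm_num)
  rw [add_zero, div_one] at h
  refine h.congr' ?_
  filter_upwards [hx.eventually_gt_atTop 0] with i hi
  simp only [Pi.div_apply]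
  rw [one_add_div hi.ne', one_add_div hi.ne', div_div_div_cancel_right₀ hi.ne']

end

section
variable {E0 : ℝ} {γ q ν : ℕ → ℝ}

lemma tendsto_add_aPar_pow_atTop (hE0 : 0 ≤ E0) {P : ℝ} (hP0 : 0 < P)
    (hP : Tendsto (fun n => bScale E0 (γ n) (ν n)) atTop (𝓝 P)) (hν : ∀ n, 0 < ν n)
    (hq : ∀ n, -1 < q n ∧ q n < 1) (hq1 : Tendsto q atTop (𝓝 1))
    (hA : ∀ n, EqA E0 (γ n) (q n) (ν n)) :
    Tendsto (fun n => (ν n + aPar E0 (γ n)) ^ 7) atTop atTop := by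
  have hgap : Tendsto (fun n => (1 - q n) * (1 + q n) / 12) atTop (𝓝[>] 0) := by
    refine tendsto_nhdsWithin_iff.2 ⟨?_, Eventually.of_forall fun n => ?_⟩
    · simpa using (((tendsto_const_nhds (x := (1:ℝ))).sub hq1).mul (hq1.const_add 1)).div_const 12
    · obtain ⟨hq₀, hq₁⟩ := hq n
      exact div_pos (mul_pos (sub_pos.2 hq₁) (by linarith)) (by norm_num)
  have hprod :
      Tendsto (fun n => (ν n + aPar E0 (γ n))^4 * (ν n + E1Par E0 (γ n))^3) atTop atTop := by
    refine ((hP.pow 2).pos_mul_atTop (by positivity) hgap.inv_tendsto_nhdsGT_zero).congr fun n => ?_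
    obtain ⟨hq₀, hq₁⟩ := hq n
    have h₁ : 1 - q n ≠ 0 := by linarith
    have h₂ : 1 + q n ≠ 0 := by linarith
    simp only [Pi.inv_apply, bScale_sq_of_eqA hE0 (hν n) (hA n)]
    field_simp
  refine tendsto_atTop_mono (fun n => ?_) hprod
  have hE := add_E1Par_pos (γ := γ n) hE0 (hν n)
  have hEA : ν n + E1Par E0 (γ n) ≤ ν n + aPar E0 (γ n) := by
    linarith [aPar_eq_E1Par_add E0 (γ n)]
  calc (ν n + aPar E0 (γ n))^4 * (ν n + E1Par E0 (γ n))^3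
      ≤ (ν n + aPar E0 (γ n))^4 * (ν n + aPar E0 (γ n))^3 := by gcongr
    _ = (ν n + aPar E0 (γ n))^7 := by ring

lemma tendsto_bScale_ratio (hE0 : -4 ≤ E0) (hγ : Tendsto γ atTop (𝓝 0))
    (hν : Tendsto ν atTop atTop) :
    Tendsto (fun n => ν n^2 * (ν n + aPar E0 (γ n) + epsPar E0 (γ n)) /
      ((ν n + aPar E0 (γ n))^2 * (ν n + E1Par E0 (γ n)))) atTop (𝓝 1) := by
  have ha := tendsto_aPar hE0 hγ
  have h₁ := tendsto_add_div_add_atTop hν (tendsto_const_nhds (x := 0)) ha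
  have h₂ := tendsto_add_div_add_atTop hν (ha.add (tendsto_epsPar hE0 hγ)) (tendsto_E1Par hE0 hγ)
  simpa using ((h₁.pow 2).mul h₂).congr fun n => by
    rw [add_zero, div_pow, div_mul_div_comm, add_assoc]

end

/-- at the ω1-ω2 bifurcation power law `γ⁴/μ → C12`, the transition
solutions with `q → 1` have `ν → ∞` with `γ²ν → C12`; equivalently
`γ²ω → C12` for `ω = E1 + ν`. -/
theorem omega3_asymptotics_at_omega12_bifurcation
    (E0 : ℝ) (hE0 : 0 < E0) (γ μ q ν : ℕ → ℝ)
    (C12 : ℝ) (hC12 : C12 = (3 * Real.sqrt 3 / 16) * E0 ^ ((3:ℝ)/2) * (E0 + 4)^2)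
    (hγpos : ∀ n, 0 < γ n)
    (hγ0 : Tendsto γ atTop (nhds 0))
    (hμpos : ∀ n, 0 < μ n)
    (hpow : Tendsto (fun n => (γ n)^4 / μ n) atTop (nhds C12))
    (hνpos : ∀ n, 0 < ν n)
    (hq : ∀ n, 0 < q n ∧ q n < 1)
    (hA : ∀ n, EqA E0 (γ n) (q n) (ν n))
    (hB : ∀ n, EqB E0 (γ n) (μ n) (q n) (ν n))
    (hq1 : Tendsto q atTop (nhds 1)) :
    Tendsto ν atTop atTop ∧
    Tendsto (fun n => (γ n)^2 * ν n) atTop (nhds C12) ∧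
    Tendsto (fun n => (γ n)^2 * (E1Par E0 (γ n) + ν n)) atTop (nhds C12) := by
  have hq' : ∀ n, -1 < q n ∧ q n < 1 := fun n => ⟨by linarith [hq n], (hq n).2⟩
  have hE0' : -4 ≤ E0 := by linarith
  have hP : Tendsto (fun n => bScale E0 (γ n) (ν n)) atTop (𝓝 C12) := by
    have hK : Tendsto (fun n => 2/9 * ((2 + q n)^2 / (1 + q n))) atTop (𝓝 1) := by
      convert (((hq1.const_add 2).pow 2).div (hq1.const_add 1) (by norm_num)).const_mul (2/9)
        using 2 <;> norm_num
    simpa using (hK.mul hpow).congr fun n =>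
      (bScale_eq_of_eqB hE0.le (hνpos n) (hγpos n).ne' (hμpos n).ne' (hq' n).1 (hB n)).symm
  have hν : Tendsto ν atTop atTop := by
    have hApow := tendsto_add_aPar_pow_atTop hE0.le (by rw [hC12]; positivity) hP hνpos hq' hq1 hA
    have hAtop := tendsto_atTop_of_pow_tendsto_atTop (by norm_num)
      (Eventually.of_forall fun n => (add_aPar_pos hE0.le (hνpos n)).le) hApow
    exact (hAtop.atTop_add (tendsto_aPar hE0' hγ0).neg).congr fun n => add_neg_cancel_right _ _
  have hγν : Tendsto (fun n => (γ n)^2 * ν n) atTop (𝓝 C12) := by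
    simpa using (hP.mul (tendsto_bScale_ratio hE0' hγ0 hν)).congr fun n =>
      (sq_mul_eq_bScale_mul hE0.le (hνpos n)).symm
  have hγE1 : Tendsto (fun n => (γ n)^2 * E1Par E0 (γ n)) atTop (𝓝 0) := by
    simpa using (hγ0.pow 2).mul (tendsto_E1Par hE0' hγ0)
  exact ⟨hν, hγν, by simpa [mul_add] using hγE1.add hγν⟩
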